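/- For all IPC formulas Q, X, Y, the formula (QX ⊃ Y) ⊃ [(QQX ⊃ Y) ⊃ QQY], i.e. [(X ⊃ Q) ⊃ Y] ⊃ {[(((X ⊃ Q) ⊃ Q)) ⊃ Y] ⊃ [(Y ⊃ Q) ⊃ Q]}, is a theorem of IPC. -/
import Mathlib


/-- Formulas of the Implicational Propositional Calculus: propositional
variables and implication. -/
inductive IPCFormula : Type where
  | var : ℕ → IPCFormula
  | imp : IPCFormula → IPCFormula → IPCFormula

infixr:60 " ⊃' " => IPCFormula.imp

/-- Derivability from a set of hypotheses Γ in the Hilbert system with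
axiom schemes IPC1, IPC2, Peirce and the rule modus ponens. -/
inductive IPCDeriv : Set IPCFormula → IPCFormula → Prop where
  | hyp {Γ : Set IPCFormula} {X : IPCFormula} : X ∈ Γ → IPCDeriv Γ X
  | ipc1 {Γ : Set IPCFormula} (X Y : IPCFormula) :
      IPCDeriv Γ (X ⊃' (Y ⊃' X))
  | ipc2 {Γ : Set IPCFormula} (X Y Z : IPCFormula) :
      IPCDeriv Γ ((X ⊃' (Y ⊃' Z)) ⊃' ((X ⊃' Y) ⊃' (X ⊃' Z)))
  | peirce {Γ : Set IPCFormula} (X Y : IPCFormula) :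
      IPCDeriv Γ (((X ⊃' Y) ⊃' X) ⊃' X)
  | mp {Γ : Set IPCFormula} {X Y : IPCFormula} :
      IPCDeriv Γ (X ⊃' Y) → IPCDeriv Γ X → IPCDeriv Γ Y

/-- A theorem of IPC: derivable from no hypotheses. -/
def IPCThm (X : IPCFormula) : Prop := IPCDeriv ∅ X

/-- Disjunction defined within IPC: X ∨ Y := (X ⊃ Y) ⊃ Y. -/
def IPCFormula.disj (X Y : IPCFormula) : IPCFormula := (X ⊃' Y) ⊃' Y

lemma IPCDeriv.weaken {Γ Δ : Set IPCFormula} {X : IPCFormula}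
    (h : IPCDeriv Γ X) (hs : Γ ⊆ Δ) : IPCDeriv Δ X := by
  induction h with
  | hyp hm => exact .hyp (hs hm)
  | ipc1 A B => exact .ipc1 A B
  | ipc2 A B C => exact .ipc2 A B C
  | peirce A B => exact .peirce A B
  | mp _ _ ih1 ih2 => exact .mp ih1 ih2

lemma IPCDeriv.id (Γ : Set IPCFormula) (X : IPCFormula) : IPCDeriv Γ (X ⊃' X) :=
  .mp (.mp (.ipc2 X (X ⊃' X) X) (.ipc1 X (X ⊃' X))) (.ipc1 X X)

lemma IPCDeriv.ded_aux {Δ : Set IPCFormula} {B : IPCFormula}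
    (h : IPCDeriv Δ B) :
    ∀ {Γ : Set IPCFormula} {A : IPCFormula}, Δ = insert A Γ → IPCDeriv Γ (A ⊃' B) := by
  induction h with
  | @hyp X hm =>
    intro Γ A hΔ
    subst hΔ
    rcases hm with rfl | hm
    · exact .id Γ X
    · exact .mp (.ipc1 X A) (.hyp hm)
  | ipc1 X Y => exact fun _ => .mp (.ipc1 _ _) (.ipc1 X Y)
  | ipc2 X Y Z => exact fun _ => .mp (.ipc1 _ _) (.ipc2 X Y Z)
  | peirce X Y => exact fun _ => .mp (.ipc1 _ _) (.peirce X Y)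
  | @mp X Y _ _ ih1 ih2 =>
    intro Γ A hΔ
    exact .mp (.mp (.ipc2 A X Y) (ih1 hΔ)) (ih2 hΔ)

lemma IPCDeriv.ded {Γ : Set IPCFormula} {A B : IPCFormula}
    (h : IPCDeriv (insert A Γ) B) : IPCDeriv Γ (A ⊃' B) :=
  h.ded_aux rfl

theorem stmt_7 (Q X Y : IPCFormula) :
    IPCThm (((X ⊃' Q) ⊃' Y) ⊃' ((((X ⊃' Q) ⊃' Q) ⊃' Y) ⊃' ((Y ⊃' Q) ⊃' Q))) := by
  apply IPCDeriv.ded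
  apply IPCDeriv.ded
  apply IPCDeriv.ded
  set Γ : Set IPCFormula :=
    insert (Y ⊃' Q) (insert (((X ⊃' Q) ⊃' Q) ⊃' Y) (insert ((X ⊃' Q) ⊃' Y) ∅)) with hΓ
  have h1 : IPCDeriv Γ ((X ⊃' Q) ⊃' Y) := .hyp (by simp [hΓ])
  have h2 : IPCDeriv Γ (((X ⊃' Q) ⊃' Q) ⊃' Y) := .hyp (by simp [hΓ])
  have h3 : IPCDeriv Γ (Y ⊃' Q) := .hyp (by simp [hΓ])
  have hqxq : IPCDeriv Γ ((X ⊃' Q) ⊃' Q) := by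
    apply IPCDeriv.ded
    exact .mp (h3.weaken (Set.subset_insert _ _))
      (.mp (h1.weaken (Set.subset_insert _ _)) (.hyp (Set.mem_insert _ _)))
  exact .mp h3 (.mp h2 hqxq)
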